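/- Let n ≥ 2, let α > 0 be real, let a ∈ ℤ, and let μ = (μ_1,…,μ_n) ∈ ℤⁿ be dominant (μ_1 ≥ … ≥ μ_n) with μ ≠ (a,…,a). Suppose there exist z ∈ ℂⁿ and A ∈ U(n) such that i·a·I + (iα/2)·zz* = A·(i·diag(μ))·A*. Then, setting b := a + (α/2)·‖z‖², b is an integer with b > a, and there exists p with 1 ≤ p ≤ n such that μ_k = b for 1 ≤ k ≤ p and μ_k = a for p < k ≤ n; i.e. μ = (b,…,b,a,…,a). (Necessity direction of Theorem 4, Case α > 0.) -/

import Mathlib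

/-!
Conjugating by `A` turns the hypothesis into `a I + (α/2) w w* = diag μ` with `w = A* z`.
The off-diagonal entries give `w l * conj (w j) = 0`, so `w` has at most one non-zero entry,
and the diagonal gives `μ j = a + (α/2) |w j|²`. Since `μ` is not constant, exactly one entry
`w i₀` is non-zero; then `μ i₀ > a = μ j` for `j ≠ i₀`, dominance forces `i₀ = 0`, and
`‖w‖ = ‖z‖` identifies `μ i₀` with `b`. So `μ = (b, a, …, a)`, i.e. `p = 1`.
-/

open Matrix Complex Finset

/-- The outer matrix `z w*` with `(l,j)` entry `z l * conj (w j)`. -/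
noncomputable def outerMat {n : ℕ} (z w : Fin n → ℂ) : Matrix (Fin n) (Fin n) ℂ :=
  Matrix.of fun l j => z l * (starRingEnd ℂ) (w j)

theorem outerMat_eq_vecMulVec {n : ℕ} (z w : Fin n → ℂ) : outerMat z w = vecMulVec z (star w) :=
  rfl

theorem mul_outerMat_mul_conjTranspose {m n : ℕ} (M N : Matrix (Fin m) (Fin n) ℂ)
    (z w : Fin n → ℂ) : M * outerMat z w * Nᴴ = outerMat (M *ᵥ z) (N *ᵥ w) := by
  simp only [outerMat_eq_vecMulVec, mul_vecMulVec, vecMulVec_mul, star_mulVec]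

theorem sum_normSq_mulVec_of_mem_unitaryGroup {ι : Type*} [Fintype ι] [DecidableEq ι]
    {U : Matrix ι ι ℂ} (hU : U ∈ unitaryGroup ι ℂ) (z : ι → ℂ) :
    ∑ j, normSq ((U *ᵥ z) j) = ∑ j, normSq (z j) := by
  have hdot : ∀ v : ι → ℂ, ((∑ j, normSq (v j) : ℝ) : ℂ) = star v ⬝ᵥ v := fun v => by
    simp [dotProduct, Complex.normSq_eq_conj_mul_self]
  apply Complex.ofReal_injective
  rw [hdot, hdot, star_mulVec, ← dotProduct_mulVec, mulVec_mulVec, ← star_eq_conjTranspose,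
    Unitary.star_mul_self_of_mem hU, one_mulVec]

theorem star_mul_mul_eq_of_eq_mul_mul_star {R : Type*} [Monoid R] [StarMul R] {U : R}
    (hU : U ∈ unitary R) {X Y : R} (h : X = U * Y * star U) : star U * X * U = Y := by
  rw [h, mul_assoc, mul_assoc, Unitary.star_mul_self_of_mem hU, mul_one, ← mul_assoc,
    Unitary.star_mul_self_of_mem hU, one_mul]

theorem smul_one_add_smul_outerMat_star_mulVec_eq {n : ℕ} {U : Matrix (Fin n) (Fin n) ℂ}
    (hU : U ∈ unitaryGroup (Fin n) ℂ) {c d : ℂ} {z : Fin n → ℂ} {Y : Matrix (Fin n) (Fin n) ℂ}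
    (h : c • 1 + d • outerMat z z = U * Y * star U) :
    c • 1 + d • outerMat (star U *ᵥ z) (star U *ᵥ z) = Y := by
  rw [← star_mul_mul_eq_of_eq_mul_mul_star hU h, ← mul_outerMat_mul_conjTranspose,
    ← star_eq_conjTranspose, star_star]
  simp only [Matrix.mul_add, Matrix.add_mul, Matrix.mul_smul, Matrix.smul_mul, Matrix.mul_one,
    Unitary.star_mul_self_of_mem hU]

section ScalarPlusRankOne

variable {n : ℕ} {c d : ℂ} {w v : Fin n → ℂ}

theorem apply_eq_of_smul_one_add_smul_outerMat_eq_diagonal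
    (h : c • 1 + d • outerMat w w = diagonal v) (i : Fin n) :
    v i = c + d * normSq (w i) := by
  have hii := congrFun (congrFun h i) i
  simp only [Matrix.add_apply, Matrix.smul_apply, one_apply_eq, diagonal_apply_eq, outerMat,
    of_apply, smul_eq_mul, mul_one, Complex.mul_conj] at hii
  exact hii.symm

theorem eq_zero_or_eq_zero_of_smul_one_add_smul_outerMat_eq_diagonal (hd : d ≠ 0)
    (h : c • 1 + d • outerMat w w = diagonal v) {i j : Fin n} (hij : i ≠ j) :
    w i = 0 ∨ w j = 0 := by
  have hij' := congrFun (congrFun h i) j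
  simp only [Matrix.add_apply, Matrix.smul_apply, one_apply_ne hij, diagonal_apply_ne _ hij,
    outerMat, of_apply, smul_eq_mul, mul_zero, zero_add, mul_eq_zero, hd, false_or,
    map_eq_zero] at hij'
  exact hij'

end ScalarPlusRankOne

theorem Antitone.val_eq_zero_of_lt_of_forall_ne {n : ℕ} {β : Type*} [Preorder β] {f : Fin n → β}
    (hf : Antitone f) {a : β} {i₀ : Fin n} (hrest : ∀ j, j ≠ i₀ → f j = a) (hlt : a < f i₀) :
    (i₀ : ℕ) = 0 := by
  by_contra hi₀
  have h0 : (⟨0, i₀.pos⟩ : Fin n) ≠ i₀ := fun he => hi₀ (by rw [← he])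
  have h0_le : (⟨0, i₀.pos⟩ : Fin n) ≤ i₀ := Fin.le_iff_val_le_val.2 (Nat.zero_le _)
  exact lt_irrefl _ (hlt.trans_le ((hf h0_le).trans (hrest _ h0).le))

theorem mu_form_of_pos_general {n : ℕ} (α : ℝ) (hα : 0 < α) (a : ℤ)
    (mu : Fin n → ℤ) (hmu : ∀ i j : Fin n, i ≤ j → mu j ≤ mu i)
    (hne : mu ≠ fun _ => a)
    (z : Fin n → ℂ) (A : Matrix.unitaryGroup (Fin n) ℂ)
    (hconj : (Complex.I * (a : ℂ)) • (1 : Matrix (Fin n) (Fin n) ℂ)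
        + ((Complex.I * (α : ℂ)) / 2) • outerMat z z
      = (A : Matrix (Fin n) (Fin n) ℂ) *
          (Complex.I • Matrix.diagonal fun i => ((mu i : ℤ) : ℂ)) *
          star (A : Matrix (Fin n) (Fin n) ℂ)) :
    ∃ b : ℤ, ((b : ℝ) = (a : ℝ) + (α / 2) * ∑ j, Complex.normSq (z j)) ∧ a < b ∧
      ∃ p : ℕ, 1 ≤ p ∧ p ≤ n ∧
        ∀ k : Fin n, ((k : ℕ) < p → mu k = b) ∧ (p ≤ (k : ℕ) → mu k = a) := by
  set w := star (A : Matrix (Fin n) (Fin n) ℂ) *ᵥ z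
  rw [← diagonal_smul] at hconj
  have hdiag := smul_one_add_smul_outerMat_star_mulVec_eq A.prop hconj
  have hmu_eq : ∀ i, (mu i : ℝ) = a + α / 2 * normSq (w i) := fun i => by
    have h := apply_eq_of_smul_one_add_smul_outerMat_eq_diagonal hdiag i
    simp only [Pi.smul_apply, smul_eq_mul] at h
    have h' : (mu i : ℂ) = a + α / 2 * normSq (w i) :=
      mul_left_cancel₀ I_ne_zero (by linear_combination h)
    exact_mod_cast h'
  have hmu_eq_a : ∀ i, mu i = a ↔ w i = 0 := fun i => by
    rw [← @Int.cast_inj ℝ, hmu_eq i]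
    simp [hα.ne']
  obtain ⟨i₀, hi₀⟩ : ∃ i, mu i ≠ a := by
    contrapose! hne
    exact funext hne
  have hw₀ : w i₀ ≠ 0 := mt (hmu_eq_a i₀).2 hi₀
  have hw_rest : ∀ j, j ≠ i₀ → w j = 0 := fun j hj =>
    (eq_zero_or_eq_zero_of_smul_one_add_smul_outerMat_eq_diagonal (by simp [hα.ne']) hdiag
      hj).resolve_right hw₀
  have hmu_rest : ∀ j, j ≠ i₀ → mu j = a := fun j hj => (hmu_eq_a j).2 (hw_rest j hj)
  have hlt : a < mu i₀ := by
    have : (a : ℝ) < mu i₀ := by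
      rw [hmu_eq i₀]
      exact lt_add_of_pos_right _ (mul_pos (half_pos hα) (normSq_pos.2 hw₀))
    exact_mod_cast this
  have hi₀_zero : (i₀ : ℕ) = 0 := Antitone.val_eq_zero_of_lt_of_forall_ne hmu hmu_rest hlt
  have hnorm : ∑ j, normSq (z j) = normSq (w i₀) := by
    rw [← sum_normSq_mulVec_of_mem_unitaryGroup (Unitary.star_mem A.prop),
      Finset.sum_eq_single i₀ (fun j _ hj => normSq_eq_zero.2 (hw_rest j hj)) (by simp)]
  refine ⟨mu i₀, by rw [hnorm, hmu_eq], hlt, 1, le_rfl, i₀.pos,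
    fun k => ⟨fun hk => ?_, fun hk => ?_⟩⟩
  · rw [Fin.ext (show (k : ℕ) = i₀ by omega)]
  · exact hmu_rest k (fun h => by subst h; omega)

/-- necessity in Theorem 4, case `α > 0`: if
`i a I + (i α/2) z z*` is unitarily conjugate to `i diag(μ)` for some dominant
`μ ≠ (a,…,a)`, then `b := a + (α/2)‖z‖²` is an integer `> a` and
`μ = (b,…,b,a,…,a)` with `b` occurring `p` times, `1 ≤ p ≤ n`. -/
theorem mu_form_of_pos {n : ℕ} (hn : 2 ≤ n) (α : ℝ) (hα : 0 < α) (a : ℤ)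
    (mu : Fin n → ℤ) (hmu : ∀ i j : Fin n, i ≤ j → mu j ≤ mu i)
    (hne : mu ≠ fun _ => a)
    (z : Fin n → ℂ) (A : Matrix.unitaryGroup (Fin n) ℂ)
    (hconj : (Complex.I * (a : ℂ)) • (1 : Matrix (Fin n) (Fin n) ℂ)
        + ((Complex.I * (α : ℂ)) / 2) • outerMat z z
      = (A : Matrix (Fin n) (Fin n) ℂ) *
          (Complex.I • Matrix.diagonal fun i => ((mu i : ℤ) : ℂ)) *
          star (A : Matrix (Fin n) (Fin n) ℂ)) :
    ∃ b : ℤ, ((b : ℝ) = (a : ℝ) + (α / 2) * ∑ j, Complex.normSq (z j)) ∧ a < b ∧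
      ∃ p : ℕ, 1 ≤ p ∧ p ≤ n ∧
        ∀ k : Fin n, ((k : ℕ) < p → mu k = b) ∧ (p ≤ (k : ℕ) → mu k = a) :=
  mu_form_of_pos_general α hα a mu hmu hne z A hconj
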